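/- arXiv:2009.06557 — 2 statements merged into one kernel-verified Lean document; each statement's English description precedes it below -/
import Mathlib

section
/- Under partial device participation with sampling with replacement, the second moment of the aggregated stochastic direction satisfies E[‖g_{t,k}‖²] ≤ (1/S)·(12 Σ_{i=1}^N p_i σ_i² + 24 Σ_{i=1}^N p_i G_i²) + 4 Σ_{i=1}^N p_i (σ_i² + G_i²), where the first term is the variance caused by partial participation and the second by the stochasticity of local updates. -/
/-!
Jensen's inequality bounds `‖S⁻¹ • ∑ₛ g_{iₛ}‖²` by the average of the `‖g_{iₛ}‖²`, and since each
sampled index is independent of the gradient noise, `E‖g_{iₛ}‖² = ∑ᵢ pᵢ E‖gᵢ‖²`, while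
`‖gᵢ‖² ≤ 2‖gᵢ - ∇fᵢ(xᵢ)‖² + 2Gᵢ²`. This gives the bound even without the `1/S` term.

Since a Bochner integral of a non-integrable function is `0`, square integrability of `gᵢ` for
`pᵢ > 0` has to be derived from that of the aggregate. Choose `r` so large that, by a union bound
needing only pairwise independence, the other clients exceed `r` with total probability at most
`pᵢ/2`. If client `i` is sampled, all other gradients are at most `r` and `‖gᵢ‖ > 2Sr`, then the
aggregate sum has norm at least `‖gᵢ‖/2`. This yields
`pᵢ E[φ(gᵢ)] ≤ 4 E‖∑ₛ g_{iₛ}‖² + (pᵢ/2) E[φ(gᵢ)]` for the tail `φ(v) = ‖v‖² 1{‖v‖ > 2Sr}`,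
which is absorbed after truncating `φ` at finite heights.
-/

open MeasureTheory ProbabilityTheory

section

open Filter Topology Finset
open scoped ENNReal

theorem norm_le_two_mul_norm_sum {κ E : Type*} [Fintype κ] [SeminormedAddCommGroup E]
    [NormedSpace ℝ E] {u : κ → E} {w : E} {r : ℝ} (hr : 0 ≤ r)
    (hw : 2 * Fintype.card κ * r ≤ ‖w‖) (hu : ∀ s, u s = w ∨ ‖u s‖ ≤ r)
    (hw_mem : ∃ s, u s = w) :
    ‖w‖ ≤ 2 * ‖∑ s, u s‖ := by
  classical
  obtain ⟨s₀, hs₀⟩ := hw_mem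
  have hsplit : ∑ s, u s = #{s | u s = w} • w + ∑ s with u s ≠ w, u s := by
    rw [← sum_filter_add_sum_filter_not univ (u · = w),
      sum_congr rfl fun s hs => (mem_filter.1 hs).2, sum_const]
  have hcount : (1 : ℝ) ≤ #{s | u s = w} := by
    exact_mod_cast card_pos.2 ⟨s₀, mem_filter.2 ⟨mem_univ _, hs₀⟩⟩
  have hrest : ‖∑ s with u s ≠ w, u s‖ ≤ Fintype.card κ * r :=
    calc ‖∑ s with u s ≠ w, u s‖ ≤ ∑ s with u s ≠ w, r :=
          (norm_sum_le _ _).trans <| sum_le_sum fun s hs => (hu s).resolve_left (mem_filter.1 hs).2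
      _ ≤ Fintype.card κ * r := by
          rw [sum_const, nsmul_eq_mul]
          gcongr
          exact_mod_cast card_filter_le _ _
  have hmain : ‖w‖ ≤ ‖#{s | u s = w} • w‖ := by
    rw [← Nat.cast_smul_eq_nsmul ℝ, norm_smul, Real.norm_natCast]
    exact le_mul_of_one_le_left (norm_nonneg _) hcount
  have := norm_sub_norm_le (#{s | u s = w} • w) (-∑ s with u s ≠ w, u s)
  rw [norm_neg, sub_neg_eq_add, ← hsplit] at this
  linarith

theorem norm_inv_card_smul_sum_sq_le {κ E : Type*} [Fintype κ] [SeminormedAddCommGroup E]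
    [NormedSpace ℝ E] (v : κ → E) :
    ‖(Fintype.card κ : ℝ)⁻¹ • ∑ s, v s‖ ^ 2 ≤ (Fintype.card κ : ℝ)⁻¹ * ∑ s, ‖v s‖ ^ 2 := by
  set n : ℝ := (Fintype.card κ : ℝ)
  have hsum : ‖∑ s, v s‖ ^ 2 ≤ n * ∑ s, ‖v s‖ ^ 2 :=
    calc ‖∑ s, v s‖ ^ 2 ≤ (∑ s, ‖v s‖) ^ 2 := by gcongr; exact norm_sum_le _ _
      _ ≤ n * ∑ s, ‖v s‖ ^ 2 := by simpa [n] using sq_sum_le_card_mul_sum_sq (s := univ)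
  calc ‖n⁻¹ • ∑ s, v s‖ ^ 2 = n⁻¹ ^ 2 * ‖∑ s, v s‖ ^ 2 := by
        rw [norm_smul, mul_pow, norm_inv, Real.norm_natCast]
    _ ≤ n⁻¹ ^ 2 * (n * ∑ s, ‖v s‖ ^ 2) := by gcongr
    _ = (n⁻¹ * n⁻¹⁻¹ * n⁻¹) * ∑ s, ‖v s‖ ^ 2 := by rw [inv_inv]; ring
    _ = n⁻¹ * ∑ s, ‖v s‖ ^ 2 := by rw [mul_inv_mul_cancel]

theorem integral_norm_inv_card_smul_sum_sq_le {Ω κ E : Type*} [MeasurableSpace Ω] {μ : Measure Ω}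
    [Fintype κ] [NormedAddCommGroup E] [NormedSpace ℝ E] {Z : κ → Ω → E}
    (hZ : ∀ s, Integrable (fun ω => ‖Z s ω‖ ^ 2) μ) :
    ∫ ω, ‖(Fintype.card κ : ℝ)⁻¹ • ∑ s, Z s ω‖ ^ 2 ∂μ
      ≤ (Fintype.card κ : ℝ)⁻¹ * ∑ s, ∫ ω, ‖Z s ω‖ ^ 2 ∂μ := by
  rw [← integral_finsetSum _ fun s _ => hZ s, ← integral_const_mul]
  exact integral_mono_of_nonneg (ae_of_all _ fun ω => sq_nonneg _)
    ((integrable_finsetSum _ fun s _ => hZ s).const_mul _)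
    (ae_of_all _ fun ω => norm_inv_card_smul_sum_sq_le fun s => Z s ω)

theorem memLp_two_of_integrable_sq_norm_smul {Ω E : Type*} [MeasurableSpace Ω] {μ : Measure Ω}
    [NormedAddCommGroup E] [NormedSpace ℝ E] {f : Ω → E} (hf : AEStronglyMeasurable f μ) {c : ℝ}
    (hc : c ≠ 0) (h : Integrable (fun ω => ‖c • f ω‖ ^ 2) μ) : MemLp f 2 μ := by
  refine (memLp_two_iff_integrable_sq_norm hf).2 ((h.const_mul (c⁻¹ ^ 2)).congr
    (ae_of_all _ fun ω => ?_))
  simp [norm_smul, mul_pow, hc]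

theorem integral_sq_norm_le_two_mul {Ω E : Type*} [MeasurableSpace Ω] {μ : Measure Ω}
    [IsProbabilityMeasure μ] [NormedAddCommGroup E] {Y : Ω → E} (hY : MemLp Y 2 μ) (m : E) :
    ∫ ω, ‖Y ω‖ ^ 2 ∂μ ≤ 2 * ∫ ω, ‖Y ω - m‖ ^ 2 ∂μ + 2 * ‖m‖ ^ 2 := by
  have hdev : Integrable (fun ω => ‖Y ω - m‖ ^ 2) μ :=
    (hY.sub (memLp_const m)).integrable_norm_pow two_ne_zero
  calc ∫ ω, ‖Y ω‖ ^ 2 ∂μ ≤ ∫ ω, 2 * ‖Y ω - m‖ ^ 2 + 2 * ‖m‖ ^ 2 ∂μ := by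
        refine integral_mono (hY.integrable_norm_pow two_ne_zero)
          ((hdev.const_mul 2).add (integrable_const _)) fun ω => ?_
        calc ‖Y ω‖ ^ 2 ≤ (‖Y ω - m‖ + ‖m‖) ^ 2 := by gcongr; exact norm_le_norm_sub_add _ _
          _ ≤ 2 * ‖Y ω - m‖ ^ 2 + 2 * ‖m‖ ^ 2 := by linarith [add_sq_le (a := ‖Y ω - m‖) (b := ‖m‖)]
    _ = 2 * ∫ ω, ‖Y ω - m‖ ^ 2 ∂μ + 2 * ‖m‖ ^ 2 := by
        rw [integral_add (hdev.const_mul 2) (integrable_const _), integral_const_mul,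
          integral_const, probReal_univ, one_smul]

theorem memLp_two_iff_lintegral_enorm_sq_lt_top {α F : Type*} [MeasurableSpace α]
    {μ : Measure α} [NormedAddCommGroup F] {f : α → F} (hf : AEStronglyMeasurable f μ) :
    MemLp f 2 μ ↔ ∫⁻ x, ‖f x‖ₑ ^ 2 ∂μ < ∞ := by
  have hsq : AEStronglyMeasurable (fun x => ‖f x‖ ^ 2) μ := hf.norm.pow 2
  simp [memLp_two_iff_integrable_sq_norm hf, Integrable, hasFiniteIntegral_iff_enorm, hsq]

theorem tendsto_measure_setOf_lt_atTop {Ω : Type*} [MeasurableSpace Ω] {μ : Measure Ω}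
    [IsFiniteMeasure μ] {f : Ω → ℝ} (hf : Measurable f) :
    Tendsto (fun r : ℝ => μ {ω | r < f ω}) atTop (𝓝 0) := by
  have hempty : ⋂ r : ℝ, {ω | r < f ω} = ∅ :=
    Set.eq_empty_of_forall_notMem fun ω hω => (lt_irrefl (f ω)) (Set.mem_iInter.1 hω (f ω))
  simpa [Function.comp_def, hempty] using tendsto_measure_iInter_atTop (μ := μ)
    (fun r => (measurableSet_lt measurable_const hf).nullMeasurableSet)
    (fun r r' h ω (hω : r' < f ω) => show r < f ω from h.trans_lt hω) ⟨0, measure_ne_top _ _⟩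

theorem lintegral_indicator_one_comp {Ω α : Type*} [MeasurableSpace Ω] [MeasurableSpace α]
    {μ : Measure Ω} {X : Ω → α} (hX : Measurable X) {s : Set α} (hs : MeasurableSet s) :
    ∫⁻ ω, s.indicator 1 (X ω) ∂μ = μ (X ⁻¹' s) := by
  rw [← lintegral_map (measurable_one.indicator hs) hX, lintegral_indicator_one hs,
    Measure.map_apply hX hs]

theorem ProbabilityTheory.IndepFun.lintegral_comp_mul_comp {Ω α β : Type*} [MeasurableSpace Ω]
    [MeasurableSpace α] [MeasurableSpace β] {μ : Measure Ω} {X : Ω → α} {Y : Ω → β}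
    (hXY : IndepFun X Y μ) (hX : Measurable X) (hY : Measurable Y) {f : α → ℝ≥0∞}
    {h : β → ℝ≥0∞} (hf : Measurable f) (hh : Measurable h) :
    ∫⁻ ω, f (X ω) * h (Y ω) ∂μ = (∫⁻ ω, f (X ω) ∂μ) * ∫⁻ ω, h (Y ω) ∂μ :=
  lintegral_mul_eq_lintegral_mul_lintegral_of_indepFun (hf.comp hX) (hh.comp hY) (hXY.comp hf hh)

theorem Measurable.comp_index {Ω ι E : Type*} [MeasurableSpace Ω] [MeasurableSpace ι]
    [Countable ι] [MeasurableSingletonClass ι] [MeasurableSpace E] {X : Ω → ι} {Y : ι → Ω → E}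
    (hX : Measurable X) (hY : ∀ i, Measurable (Y i)) :
    Measurable fun ω => Y (X ω) ω :=
  (measurable_from_prod_countable_right (f := fun p : ι × Ω => Y p.1 p.2) hY).comp
    (hX.prodMk measurable_id)

theorem comp_index_eq_sum_indicator {Ω ι β : Type*} [Fintype ι] (X : Ω → ι) (f : ι → Ω → β)
    [AddCommMonoid β] (ω : Ω) :
    f (X ω) ω = ∑ i, {ω | X ω = i}.indicator (f i) ω := by
  classical
  simp [Set.indicator_apply]

section SampledIndex

variable {Ω E ι : Type*} [MeasurableSpace Ω] {μ : Measure Ω} [MeasurableSpace ι]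
  [MeasurableSingletonClass ι] {X : Ω → ι} {Y : ι → Ω → E} {φ : E → ℝ}

theorem integrable_indicator_of_measure_ne_zero_imp {s : Set Ω} (hs : MeasurableSet s)
    {f : Ω → ℝ} (hf : μ s ≠ 0 → Integrable f μ) : Integrable (s.indicator f) μ := by
  rw [integrable_indicator_iff hs]
  by_cases h : μ s = 0
  · rw [IntegrableOn, Measure.restrict_eq_zero.2 h]
    exact integrable_zero_measure
  · exact (hf h).integrableOn

theorem integrable_indicator_setOf_index_eq (hX : Measurable X)
    (hY : ∀ i, μ {ω | X ω = i} ≠ 0 → Integrable (fun ω => φ (Y i ω)) μ) (i : ι) :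
    Integrable ({ω | X ω = i}.indicator fun ω => φ (Y i ω)) μ :=
  integrable_indicator_of_measure_ne_zero_imp (hX (measurableSet_singleton i)) (hY i)

variable [Fintype ι]

theorem integrable_comp_index (hX : Measurable X)
    (hY : ∀ i, μ {ω | X ω = i} ≠ 0 → Integrable (fun ω => φ (Y i ω)) μ) :
    Integrable (fun ω => φ (Y (X ω) ω)) μ := by
  simp_rw [comp_index_eq_sum_indicator X fun i ω => φ (Y i ω)]
  exact integrable_finsetSum _ fun i _ => integrable_indicator_setOf_index_eq hX hY i

theorem integral_comp_index [MeasurableSpace E] (hX : Measurable X)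
    (hY_meas : ∀ i, Measurable (Y i)) (hφ : Measurable φ) (hXY : ∀ i, IndepFun X (Y i) μ)
    (hY : ∀ i, μ {ω | X ω = i} ≠ 0 → Integrable (fun ω => φ (Y i ω)) μ) :
    ∫ ω, φ (Y (X ω) ω) ∂μ = ∑ i, μ.real {ω | X ω = i} * ∫ ω, φ (Y i ω) ∂μ := by
  simp_rw [comp_index_eq_sum_indicator X fun i ω => φ (Y i ω)]
  rw [integral_finsetSum _ fun i _ => integrable_indicator_setOf_index_eq hX hY i]
  refine sum_congr rfl fun i _ => ?_
  have hind : ∀ ω, {ω | X ω = i}.indicator (fun ω => φ (Y i ω)) ω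
      = ({i} : Set ι).indicator 1 (X ω) * φ (Y i ω) := fun ω => by
    by_cases h : X ω = i <;> simp [h]
  simp_rw [hind]
  rw [(hXY i).integral_fun_comp_mul_comp hX.aemeasurable (hY_meas i).aemeasurable
    (measurable_one.indicator (measurableSet_singleton i)).aestronglyMeasurable
    hφ.aestronglyMeasurable]
  exact congrArg (· * _) (integral_indicator_one (hX (measurableSet_singleton i)))

end SampledIndex

theorem integral_sq_norm_comp_index_le {Ω E ι : Type*} [MeasurableSpace Ω] {μ : Measure Ω}
    [IsProbabilityMeasure μ] [Fintype ι] [MeasurableSpace ι] [MeasurableSingletonClass ι]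
    [NormedAddCommGroup E] [MeasurableSpace E] [OpensMeasurableSpace E] {X : Ω → ι}
    {Y : ι → Ω → E} (hX : Measurable X) (hY_meas : ∀ i, Measurable (Y i))
    (hXY : ∀ i, IndepFun X (Y i) μ) (hY : ∀ i, μ {ω | X ω = i} ≠ 0 → MemLp (Y i) 2 μ)
    (m : ι → E) :
    ∫ ω, ‖Y (X ω) ω‖ ^ 2 ∂μ
      ≤ ∑ i, μ.real {ω | X ω = i} * (2 * ∫ ω, ‖Y i ω - m i‖ ^ 2 ∂μ + 2 * ‖m i‖ ^ 2) := by
  rw [integral_comp_index hX hY_meas (measurable_norm.pow_const 2) hXY fun i h =>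
    (hY i h).integrable_norm_pow two_ne_zero]
  refine sum_le_sum fun i _ => ?_
  rcases eq_or_ne (μ {ω | X ω = i}) 0 with h | h
  · simp [measureReal_def, h]
  · exact mul_le_mul_of_nonneg_left (integral_sq_norm_le_two_mul (hY i h) (m i)) measureReal_nonneg

section SquareIntegrability

variable {Ω E ι κ : Type*} [Fintype ι] [DecidableEq ι] [Fintype κ] [NormedAddCommGroup E]
  [NormedSpace ℝ E]

theorem indicator_mul_le_enorm_sum_sq_add_tail (idx : κ → Ω → ι) (g : ι → Ω → E) (s₀ : κ)
    (i₀ : ι) {r : ℝ} (hr : 0 ≤ r) {φ : E → ℝ≥0∞} (hφ_le : ∀ v, φ v ≤ ‖v‖ₑ ^ 2)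
    (hφ_zero : ∀ v, ‖v‖ ≤ 2 * Fintype.card κ * r → φ v = 0) (ω : Ω) :
    ({i₀} : Set ι).indicator 1 (idx s₀ ω) * φ (g i₀ ω) ≤
      4 * ‖∑ s, g (idx s ω) ω‖ₑ ^ 2 +
        ∑ j ∈ univ.erase i₀, φ (g i₀ ω) * {v : E | r < ‖v‖}.indicator 1 (g j ω) := by
  by_cases hsel : idx s₀ ω = i₀
  swap
  · simp [hsel]
  rw [Set.indicator_of_mem (Set.mem_singleton_iff.2 hsel), Pi.one_apply, one_mul]
  by_cases hlarge : ∃ j ∈ univ.erase i₀, r < ‖g j ω‖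
  · obtain ⟨j, hj, hrj⟩ := hlarge
    calc φ (g i₀ ω) = φ (g i₀ ω) * {v : E | r < ‖v‖}.indicator 1 (g j ω) := by
          rw [Set.indicator_of_mem (show g j ω ∈ {v : E | r < ‖v‖} from hrj), Pi.one_apply, mul_one]
      _ ≤ ∑ j ∈ univ.erase i₀, φ (g i₀ ω) * {v : E | r < ‖v‖}.indicator 1 (g j ω) :=
          single_le_sum (f := fun j => φ (g i₀ ω) * {v : E | r < ‖v‖}.indicator 1 (g j ω))
            (fun _ _ => zero_le) hj
      _ ≤ _ := le_add_self
  push Not at hlarge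
  by_cases hsmall : ‖g i₀ ω‖ ≤ 2 * Fintype.card κ * r
  · simp [hφ_zero _ hsmall]
  have hsum : ‖g i₀ ω‖ ≤ 2 * ‖∑ s, g (idx s ω) ω‖ := by
    refine norm_le_two_mul_norm_sum hr (le_of_not_ge hsmall) (fun s => ?_) ⟨s₀, by rw [hsel]⟩
    by_cases hs : idx s ω = i₀
    · exact .inl (by rw [hs])
    · exact .inr (hlarge _ (mem_erase.2 ⟨hs, mem_univ _⟩))
  have hsumₑ : ‖g i₀ ω‖ₑ ≤ 2 * ‖∑ s, g (idx s ω) ω‖ₑ := by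
    rw [← ofReal_norm, ← ofReal_norm, ← ENNReal.ofReal_ofNat 2, ← ENNReal.ofReal_mul zero_le_two]
    exact ENNReal.ofReal_le_ofReal hsum
  calc φ (g i₀ ω) ≤ ‖g i₀ ω‖ₑ ^ 2 := hφ_le _
    _ ≤ (2 * ‖∑ s, g (idx s ω) ω‖ₑ) ^ 2 := by gcongr
    _ = 4 * ‖∑ s, g (idx s ω) ω‖ₑ ^ 2 := by ring
    _ ≤ _ := le_self_add

variable [MeasurableSpace Ω] {μ : Measure Ω} [MeasurableSpace ι] [MeasurableSingletonClass ι]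
  [MeasurableSpace E] [OpensMeasurableSpace E]

theorem half_measure_mul_lintegral_le_of_tail_of_ne_top [IsFiniteMeasure μ]
    {idx : κ → Ω → ι} {g : ι → Ω → E} {s₀ : κ} {i₀ : ι} {r : ℝ} {φ : E → ℝ≥0∞}
    (hidx : Measurable (idx s₀)) (hg : ∀ i, Measurable (g i)) (hφ : Measurable φ) (hr : 0 ≤ r)
    (hφ_le : ∀ v, φ v ≤ ‖v‖ₑ ^ 2) (hφ_zero : ∀ v, ‖v‖ ≤ 2 * Fintype.card κ * r → φ v = 0)
    (h_indep_idx : IndepFun (idx s₀) (g i₀) μ) (h_indep : ∀ j ≠ i₀, IndepFun (g i₀) (g j) μ)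
    (htail : ∑ j ∈ univ.erase i₀, μ {ω | r < ‖g j ω‖} ≤ μ {ω | idx s₀ ω = i₀} / 2)
    (hfin : ∫⁻ ω, φ (g i₀ ω) ∂μ ≠ ∞) :
    μ {ω | idx s₀ ω = i₀} / 2 * ∫⁻ ω, φ (g i₀ ω) ∂μ
      ≤ 4 * ∫⁻ ω, ‖∑ s, g (idx s ω) ω‖ₑ ^ 2 ∂μ := by
  set a := μ {ω | idx s₀ ω = i₀}
  set I := ∫⁻ ω, φ (g i₀ ω) ∂μ
  have hlarge : MeasurableSet {v : E | r < ‖v‖} :=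
    measurableSet_lt measurable_const measurable_norm
  have hsel : ∫⁻ ω, ({i₀} : Set ι).indicator 1 (idx s₀ ω) * φ (g i₀ ω) ∂μ = a * I := by
    rw [h_indep_idx.lintegral_comp_mul_comp hidx (hg i₀)
      (measurable_one.indicator (measurableSet_singleton i₀)) hφ,
      lintegral_indicator_one_comp hidx (measurableSet_singleton i₀)]
    rfl
  have htail_term : ∀ j ∈ univ.erase i₀,
      ∫⁻ ω, φ (g i₀ ω) * {v : E | r < ‖v‖}.indicator 1 (g j ω) ∂μ = I * μ {ω | r < ‖g j ω‖} := by
    intro j hj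
    rw [(h_indep j (ne_of_mem_erase hj)).lintegral_comp_mul_comp (hg i₀) (hg j) hφ
      (measurable_one.indicator hlarge), lintegral_indicator_one_comp (hg j) hlarge]
    rfl
  have hterm_meas : ∀ j,
      Measurable fun ω => φ (g i₀ ω) * {v : E | r < ‖v‖}.indicator 1 (g j ω) := fun j =>
    (hφ.comp (hg i₀)).mul ((measurable_one.indicator hlarge).comp (hg j))
  have key := lintegral_mono (μ := μ)
    (indicator_mul_le_enorm_sum_sq_add_tail idx g s₀ i₀ hr hφ_le hφ_zero)
  rw [hsel, lintegral_add_right _ (Finset.measurable_fun_sum _ fun j _ => hterm_meas j),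
    lintegral_const_mul' _ _ (by norm_num), lintegral_finsetSum _ fun j _ => hterm_meas j,
    sum_congr rfl htail_term, ← mul_sum] at key
  have hfin' : a / 2 * I ≠ ∞ := ENNReal.mul_ne_top (by simp [a, ENNReal.div_eq_top]) hfin
  refine ENNReal.le_of_add_le_add_right hfin' ?_
  calc a / 2 * I + a / 2 * I = a * I := by rw [← add_mul, ENNReal.add_halves]
    _ ≤ _ := key
    _ ≤ _ := by rw [mul_comm (a / 2)]; gcongr

theorem half_measure_mul_lintegral_le_of_tail [IsFiniteMeasure μ]
    {idx : κ → Ω → ι} {g : ι → Ω → E} {s₀ : κ} {i₀ : ι} {r : ℝ} {φ : E → ℝ≥0∞}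
    (hidx : Measurable (idx s₀)) (hg : ∀ i, Measurable (g i)) (hφ : Measurable φ) (hr : 0 ≤ r)
    (hφ_le : ∀ v, φ v ≤ ‖v‖ₑ ^ 2) (hφ_zero : ∀ v, ‖v‖ ≤ 2 * Fintype.card κ * r → φ v = 0)
    (h_indep_idx : IndepFun (idx s₀) (g i₀) μ) (h_indep : ∀ j ≠ i₀, IndepFun (g i₀) (g j) μ)
    (htail : ∑ j ∈ univ.erase i₀, μ {ω | r < ‖g j ω‖} ≤ μ {ω | idx s₀ ω = i₀} / 2) :
    μ {ω | idx s₀ ω = i₀} / 2 * ∫⁻ ω, φ (g i₀ ω) ∂μ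
      ≤ 4 * ∫⁻ ω, ‖∑ s, g (idx s ω) ω‖ₑ ^ 2 ∂μ := by
  have hsup : ∀ v, ⨆ M : ℕ, min (φ v) M = φ v := fun v => by
    rw [← inf_iSup_eq, ENNReal.iSup_natCast, inf_top_eq]
  have hmono : Monotone fun (M : ℕ) ω => min (φ (g i₀ ω)) M := fun M M' h ω => by
    dsimp only
    gcongr
  have hφ_trunc : ∫⁻ ω, φ (g i₀ ω) ∂μ = ⨆ M : ℕ, ∫⁻ ω, min (φ (g i₀ ω)) M ∂μ :=
    calc ∫⁻ ω, φ (g i₀ ω) ∂μ = ∫⁻ ω, ⨆ M : ℕ, min (φ (g i₀ ω)) M ∂μ :=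
          lintegral_congr fun ω => (hsup _).symm
      _ = _ := lintegral_iSup (fun M => (hφ.comp (hg i₀)).min measurable_const) hmono
  rw [hφ_trunc, ENNReal.mul_iSup]
  refine iSup_le fun M => half_measure_mul_lintegral_le_of_tail_of_ne_top hidx hg
    (hφ.min measurable_const) hr (fun v => (min_le_left _ _).trans (hφ_le v))
    (fun v hv => by rw [hφ_zero v hv, min_eq_left zero_le]) h_indep_idx h_indep htail ?_
  refine ((lintegral_mono fun ω => min_le_right _ _).trans_lt ?_).ne
  simp [ENNReal.mul_lt_top]

theorem memLp_two_of_memLp_two_sum_comp_index [IsFiniteMeasure μ] [SecondCountableTopology E]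
    {idx : κ → Ω → ι} {g : ι → Ω → E} {s₀ : κ} {i₀ : ι}
    (hidx : Measurable (idx s₀)) (hg : ∀ i, Measurable (g i))
    (h_indep_idx : IndepFun (idx s₀) (g i₀) μ) (h_indep : ∀ j ≠ i₀, IndepFun (g i₀) (g j) μ)
    (hsel : μ {ω | idx s₀ ω = i₀} ≠ 0) (hsum : MemLp (fun ω => ∑ s, g (idx s ω) ω) 2 μ) :
    MemLp (g i₀) 2 μ := by
  have htail : Tendsto (fun r : ℝ => ∑ j ∈ univ.erase i₀, μ {ω | r < ‖g j ω‖}) atTop (𝓝 0) := by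
    simpa using tendsto_finsetSum _ fun j _ => tendsto_measure_setOf_lt_atTop (μ := μ) (hg j).norm
  obtain ⟨r, hr, hr_tail⟩ := ((eventually_ge_atTop 0).and
    (htail.eventually (ge_mem_nhds (ENNReal.half_pos hsel)))).exists
  set t := 2 * (Fintype.card κ : ℝ) * r
  set φ : E → ℝ≥0∞ := {v | t < ‖v‖}.indicator fun v => ‖v‖ₑ ^ 2
  have hφ : Measurable φ :=
    (measurable_enorm.pow_const 2).indicator (measurableSet_lt measurable_const measurable_norm)
  have hbound := half_measure_mul_lintegral_le_of_tail hidx hg hφ hr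
    (Set.indicator_le_self' fun _ _ => zero_le) (fun v hv => Set.indicator_of_notMem
      (show v ∉ {v : E | t < ‖v‖} from not_lt.2 hv) _) h_indep_idx h_indep hr_tail
  have hsum_fin := (memLp_two_iff_lintegral_enorm_sq_lt_top hsum.1).1 hsum
  have hφ_fin : ∫⁻ ω, φ (g i₀ ω) ∂μ < ∞ := ENNReal.lt_top_of_mul_ne_top_right
    (ne_top_of_le_ne_top (ENNReal.mul_ne_top (by simp) hsum_fin.ne) hbound)
    (ENNReal.half_pos hsel).ne'
  have hsplit : ∀ v : E, ‖v‖ₑ ^ 2 ≤ ENNReal.ofReal t ^ 2 + φ v := fun v => by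
    by_cases hv : t < ‖v‖
    · simp [φ, Set.indicator_of_mem (show v ∈ {v : E | t < ‖v‖} from hv)]
    · calc ‖v‖ₑ ^ 2 ≤ ENNReal.ofReal t ^ 2 := by
            rw [← ofReal_norm]
            gcongr
            exact not_lt.1 hv
        _ ≤ _ := le_self_add
  refine (memLp_two_iff_lintegral_enorm_sq_lt_top (hg i₀).aestronglyMeasurable).2 ?_
  calc ∫⁻ ω, ‖g i₀ ω‖ₑ ^ 2 ∂μ ≤ ∫⁻ ω, ENNReal.ofReal t ^ 2 + φ (g i₀ ω) ∂μ :=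
        lintegral_mono fun ω => hsplit _
    _ = ENNReal.ofReal t ^ 2 * μ Set.univ + ∫⁻ ω, φ (g i₀ ω) ∂μ := by
        rw [lintegral_add_left measurable_const, lintegral_const]
    _ < ∞ := ENNReal.add_lt_top.2 ⟨by simp [ENNReal.mul_lt_top], hφ_fin⟩

end SquareIntegrability

end

theorem federated_partial_participation_second_moment_general
    {d N S : ℕ} (hS : 0 < S)
    {Ω : Type*} [MeasurableSpace Ω] (μ : Measure Ω) [IsProbabilityMeasure μ]
    -- client weights
    (p : Fin N → ℝ) (hp_nonneg : ∀ i, 0 ≤ p i)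
    -- local losses with bounded gradients, and their local iterates x^{(i)}_{t,k}
    (f : Fin N → EuclideanSpace ℝ (Fin d) → ℝ)
    (G : Fin N → ℝ)
    (hG : ∀ i y, ‖gradient (f i) y‖ ^ 2 ≤ (G i) ^ 2)
    (x : Fin N → EuclideanSpace ℝ (Fin d))
    -- stochastic gradients g^{(i)}_{t,k}: unbiased with bounded variance
    (g : Fin N → Ω → EuclideanSpace ℝ (Fin d))
    (σ : Fin N → ℝ)
    (hg_meas : ∀ i, Measurable (g i))
    (hg_var : ∀ i, ∫ ω, ‖g i ω - gradient (f i) (x i)‖ ^ 2 ∂μ ≤ (σ i) ^ 2)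
    -- stochastic gradients of distinct clients are independent
    (hg_indep : ∀ i i', i ≠ i' → IndepFun (g i) (g i') μ)
    -- sampled client indices: i.i.d. with replacement, P(idx s = i) = p i,
    -- independent of the stochastic gradient noise
    (idx : Fin S → Ω → Fin N)
    (hidx_meas : ∀ s, Measurable (idx s))
    (hidx_dist : ∀ s i, (μ {ω | idx s ω = i}).toReal = p i)
    (hidx_indep_noise : ∀ s i, IndepFun (idx s) (g i) μ)
    -- integrability of the squared norm of the aggregated direction
    (h_agg_int :
      Integrable (fun ω => ‖(S : ℝ)⁻¹ • ∑ s : Fin S, g (idx s ω) ω‖ ^ 2) μ) :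
    ∫ ω, ‖(S : ℝ)⁻¹ • ∑ s : Fin S, g (idx s ω) ω‖ ^ 2 ∂μ
      ≤ (1 / (S : ℝ)) * (12 * ∑ i, p i * (σ i) ^ 2 + 24 * ∑ i, p i * (G i) ^ 2)
        + 4 * ∑ i, p i * ((σ i) ^ 2 + (G i) ^ 2) := by
  have hS' : (S : ℝ) ≠ 0 := by exact_mod_cast hS.ne'
  have hsum : MemLp (fun ω => ∑ s, g (idx s ω) ω) 2 μ :=
    memLp_two_of_integrable_sq_norm_smul (Finset.measurable_fun_sum _ fun s _ =>
      (hidx_meas s).comp_index hg_meas).aestronglyMeasurable (inv_ne_zero hS') h_agg_int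
  have hclient : ∀ s i, μ {ω | idx s ω = i} ≠ 0 → MemLp (g i) 2 μ := fun s i hsel =>
    memLp_two_of_memLp_two_sum_comp_index (hidx_meas s) hg_meas (hidx_indep_noise s i)
      (fun j hj => hg_indep i j hj.symm) hsel hsum
  have hsq : ∀ s i, μ {ω | idx s ω = i} ≠ 0 → Integrable (fun ω => ‖g i ω‖ ^ 2) μ :=
    fun s i hsel => (hclient s i hsel).integrable_norm_pow two_ne_zero
  have hsample : ∀ s,
      ∫ ω, ‖g (idx s ω) ω‖ ^ 2 ∂μ ≤ ∑ i, p i * (2 * σ i ^ 2 + 2 * G i ^ 2) := fun s =>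
    (integral_sq_norm_comp_index_le (hidx_meas s) hg_meas (hidx_indep_noise s) (hclient s)
      fun i => gradient (f i) (x i)).trans <| Finset.sum_le_sum fun i _ => by
        rw [measureReal_def, hidx_dist]
        exact mul_le_mul_of_nonneg_left (by linarith [hg_var i, hG i (x i)]) (hp_nonneg i)
  calc ∫ ω, ‖(S : ℝ)⁻¹ • ∑ s : Fin S, g (idx s ω) ω‖ ^ 2 ∂μ
      ≤ (S : ℝ)⁻¹ * ∑ s : Fin S, ∫ ω, ‖g (idx s ω) ω‖ ^ 2 ∂μ := by
        simpa using integral_norm_inv_card_smul_sum_sq_le fun s =>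
          integrable_comp_index (φ := fun v => ‖v‖ ^ 2) (hidx_meas s) (hsq s)
    _ ≤ (S : ℝ)⁻¹ * ∑ _s : Fin S, ∑ i, p i * (2 * σ i ^ 2 + 2 * G i ^ 2) := by
        gcongr with s
        exact hsample s
    _ = ∑ i, p i * (2 * σ i ^ 2 + 2 * G i ^ 2) := by simp [hS']
    _ ≤ _ := by
        have hσ_sum := Finset.sum_nonneg fun i (_ : i ∈ Finset.univ) =>
          mul_nonneg (hp_nonneg i) (sq_nonneg (σ i))
        have hG_sum := Finset.sum_nonneg fun i (_ : i ∈ Finset.univ) =>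
          mul_nonneg (hp_nonneg i) (sq_nonneg (G i))
        have hS_inv : 0 ≤ 1 / (S : ℝ) := by positivity
        simp only [mul_add, Finset.sum_add_distrib, mul_left_comm (p _) 2, ← Finset.mul_sum]
        nlinarith [mul_nonneg hS_inv hσ_sum, mul_nonneg hS_inv hG_sum]

/-- **Second moment of the aggregated direction under partial participation.**
With `S` client indices sampled i.i.d. with replacement according to `p`, independently of
the stochastic-gradient noise, and stochastic gradients of distinct clients independent,
`E[‖g_{t,k}‖²] ≤ (1/S)(12 ∑ᵢ pᵢσᵢ² + 24 ∑ᵢ pᵢGᵢ²) + 4 ∑ᵢ pᵢ(σᵢ² + Gᵢ²)`. -/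
theorem federated_partial_participation_second_moment
    {d N S : ℕ} (hS : 0 < S)
    {Ω : Type*} [MeasurableSpace Ω] (μ : Measure Ω) [IsProbabilityMeasure μ]
    -- client weights
    (p : Fin N → ℝ) (hp_nonneg : ∀ i, 0 ≤ p i) (hp_lt_one : ∀ i, p i < 1)
    (hp_sum : ∑ i, p i = 1)
    -- local losses with bounded gradients, and their local iterates x^{(i)}_{t,k}
    (f : Fin N → EuclideanSpace ℝ (Fin d) → ℝ)
    (hf_diff : ∀ i, Differentiable ℝ (f i))
    (G : Fin N → ℝ)
    (hG : ∀ i y, ‖gradient (f i) y‖ ^ 2 ≤ (G i) ^ 2)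
    (x : Fin N → EuclideanSpace ℝ (Fin d))
    -- stochastic gradients g^{(i)}_{t,k}: unbiased with bounded variance
    (g : Fin N → Ω → EuclideanSpace ℝ (Fin d))
    (σ : Fin N → ℝ)
    (hg_meas : ∀ i, Measurable (g i))
    (hg_int : ∀ i, Integrable (g i) μ)
    (hg_unbiased : ∀ i, ∫ ω, g i ω ∂μ = gradient (f i) (x i))
    (hg_var : ∀ i, ∫ ω, ‖g i ω - gradient (f i) (x i)‖ ^ 2 ∂μ ≤ (σ i) ^ 2)
    -- stochastic gradients of distinct clients are independent
    (hg_indep : ∀ i i', i ≠ i' → IndepFun (g i) (g i') μ)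
    -- sampled client indices: i.i.d. with replacement, P(idx s = i) = p i,
    -- independent of the stochastic gradient noise
    (idx : Fin S → Ω → Fin N)
    (hidx_meas : ∀ s, Measurable (idx s))
    (hidx_dist : ∀ s i, (μ {ω | idx s ω = i}).toReal = p i)
    (hidx_iid : iIndepFun idx μ)
    (hidx_indep_noise : ∀ s i, IndepFun (idx s) (g i) μ)
    -- integrability of the squared norm of the aggregated direction
    (h_agg_int :
      Integrable (fun ω => ‖(S : ℝ)⁻¹ • ∑ s : Fin S, g (idx s ω) ω‖ ^ 2) μ) :
    ∫ ω, ‖(S : ℝ)⁻¹ • ∑ s : Fin S, g (idx s ω) ω‖ ^ 2 ∂μ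
      ≤ (1 / (S : ℝ)) * (12 * ∑ i, p i * (σ i) ^ 2 + 24 * ∑ i, p i * (G i) ^ 2)
        + 4 * ∑ i, p i * ((σ i) ^ 2 + (G i) ^ 2) :=
  federated_partial_participation_second_moment_general hS μ p hp_nonneg f G hG x g σ hg_meas hg_var
    hg_indep idx hidx_meas hidx_dist hidx_indep_noise h_agg_int
end

section
/- For the ε-FedAdam update, the auxiliary sequence z_t := x_t + (β₁/(1−β₁))(x_t − x_{t−1}) satisfies, for all t ≥ 1, z_{t+1} = z_t + (η β₁/(1−β₁)) · (1/(√v_{t−1}+ε) − 1/(√v_t+ε)) ⊙ m_{t−1} − (η/(√v_t+ε)) ⊙ Δ_t, where all operations on vectors (square root, addition of ε, reciprocal, and the product ⊙) are coordinatewise. -/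
/-- **Auxiliary sequence identity for ε-FedAdam.**
With `z t = x t + (β₁/(1−β₁))(x t − x (t−1))`, the ε-FedAdam update
`x (t+1) = x t − (η/(√(v t)+ε)) ⊙ m t` together with the momentum recursion
`m t = β₁ m (t−1) + (1−β₁) Δ t` yields, for all `t ≥ 1` and all coordinates `j`,
`z (t+1) = z t + (ηβ₁/(1−β₁))(1/(√(v (t−1))+ε) − 1/(√(v t)+ε)) ⊙ m (t−1)
          − (η/(√(v t)+ε)) ⊙ Δ t`. -/
theorem epsFedAdam_auxiliary_sequence
    {d : ℕ}
    (η ε β₁ : ℝ) (hη : 0 < η) (hε : 0 < ε) (hβ₁ : β₁ ∈ Set.Ico (0 : ℝ) 1)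
    (Δ m v x z : ℕ → Fin d → ℝ)
    (hv_nonneg : ∀ t j, 0 ≤ v t j)
    (hm : ∀ t : ℕ, 1 ≤ t → ∀ j, m t j = β₁ * m (t - 1) j + (1 - β₁) * Δ t j)
    (hx : ∀ (t : ℕ) (j : Fin d),
      x (t + 1) j = x t j - η / (Real.sqrt (v t j) + ε) * m t j)
    (hz : ∀ t : ℕ, 1 ≤ t → ∀ j,
      z t j = x t j + β₁ / (1 - β₁) * (x t j - x (t - 1) j)) :
    ∀ t : ℕ, 1 ≤ t → ∀ j : Fin d,
      z (t + 1) j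
        = z t j
          + η * β₁ / (1 - β₁)
              * (1 / (Real.sqrt (v (t - 1) j) + ε) - 1 / (Real.sqrt (v t j) + ε))
              * m (t - 1) j
          - η / (Real.sqrt (v t j) + ε) * Δ t j := by
  intro t ht j
  obtain ⟨k, rfl⟩ : ∃ k, t = k + 1 := ⟨t - 1, by omega⟩
  have ha : Real.sqrt (v k j) + ε ≠ 0 :=
    ne_of_gt (by positivity)
  have hb : Real.sqrt (v (k + 1) j) + ε ≠ 0 :=
    ne_of_gt (by positivity)
  have hβ : (1 : ℝ) - β₁ ≠ 0 := by
    have := hβ₁.2; linarith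
  have h1 := hx (k + 1) j
  have h2 := hx k j
  have h3 := hm (k + 1) (by omega) j
  have hz1 := hz (k + 2) (by omega) j
  have hz2 := hz (k + 1) (by omega) j
  simp only [Nat.add_sub_cancel] at h3 hz1 hz2 ⊢
  rw [show k + 1 + 1 = k + 2 from rfl] at h1
  rw [show k + 2 - 1 = k + 1 from rfl] at hz1
  rw [hz1, hz2, h1, h3, h2]
  generalize hA : Real.sqrt (v k j) + ε = A at *
  generalize hB : Real.sqrt (v (k + 1) j) + ε = B at *
  field_simp
  ring
end
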